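/- Let n ≥ 2 and i ∈ [n-1]. Then F_i^+ ∩ F_i^- = ∅, where F_i^+ := conv{v_J : J ⊆ [n-1], i ∈ J} and F_i^- := conv{v_J : J ⊆ [n-1], i ∉ J}. -/

import Mathlib

open Matrix

attribute [local instance] Classical.propDecidable

noncomputable section

namespace PetersonPaper

/-- The natural number `c` (0-based; encoding the 1-based element `c+1`) belongs to
`J ⊆ [n-1]`. -/
def memJ (n : ℕ) (J : Set (Fin (n-1))) (c : ℕ) : Prop :=
  ∃ h : c < n - 1, (⟨c, h⟩ : Fin (n-1)) ∈ J

/-- The (0-based) first element of the maximal interval of consecutive integers of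
`J` containing `i ∈ J`. -/
def compStart (n : ℕ) (J : Set (Fin (n-1))) (i : Fin (n-1)) : ℕ :=
  sInf {a : ℕ | a ≤ i.1 ∧ ∀ c : ℕ, a ≤ c → c ≤ i.1 → memJ n J c}

/-- The (0-based) last element of the maximal interval of consecutive integers of
`J` containing `i ∈ J`. -/
def compEnd (n : ℕ) (J : Set (Fin (n-1))) (i : Fin (n-1)) : ℕ :=
  sSup {b : ℕ | b < n - 1 ∧ i.1 ≤ b ∧ ∀ c : ℕ, i.1 ≤ c → c ≤ b → memJ n J c}

/-- The vertex `v_J ∈ ℝ^{n-1}`: its `i`-th coordinate is `(i+1-a)(b+1-i)` (1-based)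
if `i ∈ J` with `[a,b]` the maximal interval of `J` containing `i`, and `0`
otherwise. -/
def vJ (n : ℕ) (J : Set (Fin (n-1))) : Fin (n-1) → ℝ :=
  fun i => if i ∈ J then
    (((i.1 + 1 - compStart n J i) * (compEnd n J i + 1 - i.1) : ℕ) : ℝ) else 0

/-- The standard inner product on `ℝ^{n-1}`. -/
def dotR (n : ℕ) (a b : Fin (n-1) → ℝ) : ℝ := ∑ i, a i * b i

/-- The standard basis vector `e_i` of `ℝ^{n-1}`. -/
def stdE (n : ℕ) (i : Fin (n-1)) : Fin (n-1) → ℝ := fun j => if j = i then 1 else 0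

/-- `-α^∨_i = e_{i-1} - 2 e_i + e_{i+1}` with the convention `e_0 = e_n = 0`
(1-based; `i : Fin (n-1)` encodes `i.1+1`). -/
def negAlphaV (n : ℕ) (i : Fin (n-1)) : Fin (n-1) → ℝ :=
  fun j => (if j.1 + 1 = i.1 then 1 else 0) - 2 * (if j = i then 1 else 0)
    + (if j.1 = i.1 + 1 then 1 else 0)

/-- The face `F_i^+ = conv{v_J : i ∈ J}`. -/
def Fplus (n : ℕ) (i : Fin (n-1)) : Set (Fin (n-1) → ℝ) :=
  convexHull ℝ { v | ∃ J : Set (Fin (n-1)), i ∈ J ∧ v = vJ n J }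

/-- The face `F_i^- = conv{v_J : i ∉ J}`. -/
def Fminus (n : ℕ) (i : Fin (n-1)) : Set (Fin (n-1) → ℝ) :=
  convexHull ℝ { v | ∃ J : Set (Fin (n-1)), i ∉ J ∧ v = vJ n J }

/-- The polytope `P_{n-1} = conv{v_J : J ⊆ [n-1]}`. -/
def Ppoly (n : ℕ) : Set (Fin (n-1) → ℝ) :=
  convexHull ℝ { v | ∃ J : Set (Fin (n-1)), v = vJ n J }

/-- The face `F_{K,J} = (⋂_{i ∈ K} F_i^+) ∩ (⋂_{i ∉ J} F_i^-)` of `P_{n-1}`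
(intersecting with `P_{n-1}` itself, which encodes the convention
`F_{∅,[n-1]} = P_{n-1}` and is harmless otherwise, all faces being subsets of
`P_{n-1}`). -/
def FKJ (n : ℕ) (K J : Set (Fin (n-1))) : Set (Fin (n-1) → ℝ) :=
  Ppoly n ∩ (⋂ i ∈ K, Fplus n i) ∩ (⋂ i ∈ (Jᶜ : Set (Fin (n-1))), Fminus n i)

theorem memJ_of_mem {n : ℕ} {J : Set (Fin (n-1))} {i : Fin (n-1)} (hi : i ∈ J) :
    memJ n J i.1 :=
  ⟨i.2, hi⟩

theorem compStart_le {n : ℕ} {J : Set (Fin (n-1))} {i : Fin (n-1)} (hi : i ∈ J) :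
    compStart n J i ≤ i.1 :=
  Nat.sInf_le ⟨le_rfl, fun _ hc₁ hc₂ => le_antisymm hc₂ hc₁ ▸ memJ_of_mem hi⟩

theorem le_compEnd {n : ℕ} {J : Set (Fin (n-1))} {i : Fin (n-1)} (hi : i ∈ J) :
    i.1 ≤ compEnd n J i :=
  le_csSup ⟨n - 1, fun _ hb => hb.1.le⟩
    ⟨i.2, le_rfl, fun _ hc₁ hc₂ => le_antisymm hc₂ hc₁ ▸ memJ_of_mem hi⟩

theorem one_le_vJ_apply {n : ℕ} {J : Set (Fin (n-1))} {i : Fin (n-1)} (hi : i ∈ J) :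
    1 ≤ vJ n J i := by
  have hpos : 1 ≤ (i.1 + 1 - compStart n J i) * (compEnd n J i + 1 - i.1) :=
    Nat.one_le_iff_ne_zero.mpr <|
      Nat.mul_ne_zero (by have := compStart_le hi; omega) (by have := le_compEnd hi; omega)
  rw [vJ, if_pos hi]
  exact_mod_cast hpos

theorem vJ_apply_of_notMem {n : ℕ} {J : Set (Fin (n-1))} {i : Fin (n-1)} (hi : i ∉ J) :
    vJ n J i = 0 :=
  if_neg hi

theorem Fplus_subset_one_le_apply (n : ℕ) (i : Fin (n-1)) :
    Fplus n i ⊆ {x | 1 ≤ x i} :=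
  convexHull_min (by rintro _ ⟨J, hi, rfl⟩; exact one_le_vJ_apply hi)
    (convex_halfSpace_ge (LinearMap.proj i).isLinear 1)

theorem Fminus_subset_apply_eq_zero (n : ℕ) (i : Fin (n-1)) :
    Fminus n i ⊆ {x | x i = 0} :=
  convexHull_min (by rintro _ ⟨J, hi, rfl⟩; exact vJ_apply_of_notMem hi)
    (convex_hyperplane (LinearMap.proj i).isLinear 0)

theorem Fplus_inter_Fminus_empty (n : ℕ) (i : Fin (n-1)) :
    Fplus n i ∩ Fminus n i = ∅ := by
  refine Set.eq_empty_of_forall_notMem fun x ⟨hplus, hminus⟩ => ?_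
  have h₁ : 1 ≤ x i := Fplus_subset_one_le_apply n i hplus
  have h₀ : x i = 0 := Fminus_subset_apply_eq_zero n i hminus
  linarith

end PetersonPaper
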